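/- arXiv:2106.06574 — 2 statements merged into one kernel-verified Lean document; each statement's English description precedes it below -/
import Mathlib

section
/- (Theorem 2, Case 2: permuted leading eigenvectors are strict saddles.) Let M be an N×N real symmetric matrix with eigenvalues λ₁ > λ₂ > ⋯ > λ_r > λ_{r+1} ≥ ⋯ ≥ λ_N and d_min = min_{1 ≤ s < j ≤ r+1} (λ_s − λ_j). Let σ be a permutation of {1, …, r} different from the identity, and let X_Ω ∈ ℝ^{N×r} whose j-th column is a unit eigenvector of M with eigenvalue λ_{σ(j)}. Then there exists a nonzero U in the tangent space T_{X_Ω} = {U : X_Ωᵀ U + Uᵀ X_Ω = 0} such that hess g(X_Ω)[U,U] ≤ −(1/2) d_min ‖U‖_F²; in particular λ_min(hess g(X_Ω)) ≤ −(1/2) d_min, so X_Ω is a strict saddle point of g on the Stiefel manifold. -/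
/-! A non-identity permutation has an inversion `a < b` with `σ b < σ a`. Rotating columns `a`
and `b` of `X_Ω` into each other, `U = X_Ω K` with the skew matrix `K = E_ba - E_ab`, gives a
tangent direction with `‖U‖_F² = 2`. Since `X_Ωᵀ M X_Ω = diag(λ_σ)` and `N_r` are diagonal, the
Hessian at `U` is `(λ_{σ a} - λ_{σ b}) (b - a)`, and `b - a ≥ 1` with
`λ_{σ b} - λ_{σ a} ≥ d_min` makes it at most `-d_min = -(1/2) d_min ‖U‖_F²`. -/

open Matrix

/-- The diagonal weight matrix `N_r = diag(r, r−1, …, 1)`. -/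
noncomputable def Nr (r : ℕ) : Matrix (Fin r) (Fin r) ℝ :=
  Matrix.diagonal fun j => (r : ℝ) - (j : ℕ)

/-- The trace inner product `⟨A, B⟩ = ∑_{ij} A_{ij} B_{ij}`. -/
def tip {m n : ℕ} (A B : Matrix (Fin m) (Fin n) ℝ) : ℝ :=
  ∑ i, ∑ j, A i j * B i j

/-- `d_min = min_{1 ≤ s < j ≤ r+1} (λ_s − λ_j)` (0-based: `0 ≤ s < j ≤ r`). -/
noncomputable def dmin {N : ℕ} (lam : Fin N → ℝ) (r : ℕ) : ℝ :=
  sInf {d : ℝ | ∃ s j : Fin N, (s : ℕ) < (j : ℕ) ∧ (j : ℕ) ≤ r ∧ d = lam s - lam j}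

theorem Equiv.Perm.exists_lt_and_apply_lt_of_ne_one {α : Type*} [LinearOrder α] [WellFoundedLT α]
    {σ : Equiv.Perm α} (hσ : σ ≠ 1) : ∃ a b, a < b ∧ σ b < σ a := by
  by_contra! h
  have hmono : StrictMono σ := fun a b hab => (h a b hab).lt_of_ne (σ.injective.ne hab.ne)
  apply hσ
  ext a
  exact congrArg (· a)
    (Subsingleton.elim (hmono.orderIsoOfSurjective σ σ.surjective) (OrderIso.refl α))

namespace Matrix

variable {m n α : Type*} [DecidableEq n]

section skewUnit

variable [Ring α]

def skewUnit (a b : n) : Matrix n n α := single b a 1 - single a b 1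

theorem skewUnit_transpose (a b : n) : (skewUnit a b : Matrix n n α)ᵀ = -skewUnit a b := by
  simp [skewUnit]

theorem skewUnit_ne_zero [Nontrivial α] {a b : n} (hab : a ≠ b) :
    (skewUnit a b : Matrix n n α) ≠ 0 := by
  intro h
  simpa [skewUnit, hab, hab.symm] using congrFun (congrFun h b) a

variable [Fintype n]

theorem transpose_skewUnit_mul_self {a b : n} (hab : a ≠ b) :
    (skewUnit a b : Matrix n n α)ᵀ * skewUnit a b = single a a 1 + single b b 1 := by
  simp [skewUnit, Matrix.sub_mul, Matrix.mul_sub, hab, hab.symm]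

theorem single_mul_diagonal (i j : n) (x : α) (w : n → α) :
    single i j x * diagonal w = single i j (x * w j) := by
  ext k l
  simp only [mul_diagonal, single_apply]
  aesop

theorem skewUnit_mul_diagonal_mul_transpose {a b : n} (hab : a ≠ b) (w : n → α) :
    skewUnit a b * diagonal w * (skewUnit a b)ᵀ = single a a (w b) + single b b (w a) := by
  simp [skewUnit, Matrix.sub_mul, Matrix.mul_sub, hab, hab.symm, add_comm]

theorem trace_transpose_skewUnit_mul_self {a b : n} (hab : a ≠ b) :
    ((skewUnit a b : Matrix n n α)ᵀ * skewUnit a b).trace = 2 := by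
  rw [transpose_skewUnit_mul_self hab, trace_add, trace_single_eq_same, trace_single_eq_same]
  norm_num

end skewUnit

section frame

variable [Fintype m] [Fintype n] [CommRing α] {X : Matrix m n α}

theorem transpose_mul_mul_eq_diagonal {M : Matrix m m α} {μ : n → α} (hXX : Xᵀ * X = 1)
    (hMX : ∀ j, M *ᵥ (fun i => X i j) = μ j • fun i => X i j) :
    Xᵀ * M * X = diagonal μ := by
  have hMX' : M * X = X * diagonal μ := by
    ext i j
    rw [mul_diagonal, mul_comm]
    simpa [mulVec, dotProduct, mul_apply] using congrFun (hMX j) i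
  rw [Matrix.mul_assoc, hMX', ← Matrix.mul_assoc, hXX, Matrix.one_mul]

theorem transpose_mul_self_mul_left (hXX : Xᵀ * X = 1) (K : Matrix n n α) :
    (X * K)ᵀ * (X * K) = Kᵀ * K := by
  rw [transpose_mul, Matrix.mul_assoc, ← Matrix.mul_assoc Xᵀ, hXX, Matrix.one_mul]

theorem mul_ne_zero_of_transpose_mul_self_eq_one (hXX : Xᵀ * X = 1) {K : Matrix n n α}
    (hK : K ≠ 0) : X * K ≠ 0 := by
  intro h
  apply hK
  rw [← Matrix.one_mul K, ← hXX, Matrix.mul_assoc, h, Matrix.mul_zero]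

theorem transpose_mul_mul_add_eq_zero_of_transpose_eq_neg (hXX : Xᵀ * X = 1)
    {K : Matrix n n α} (hK : Kᵀ = -K) : Xᵀ * (X * K) + (X * K)ᵀ * X = 0 := by
  rw [← Matrix.mul_assoc, hXX, transpose_mul, Matrix.mul_assoc, hXX, hK]
  simp

end frame

end Matrix

section tip

variable {m n : ℕ}

theorem tip_eq_trace (A B : Matrix (Fin m) (Fin n) ℝ) : tip A B = (Aᵀ * B).trace := by
  simp only [tip, trace, diag, mul_apply, transpose_apply]
  exact Finset.sum_comm

theorem sum_sq_eq_trace_transpose_mul_self (U : Matrix (Fin m) (Fin n) ℝ) :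
    ∑ i, ∑ j, U i j ^ 2 = (Uᵀ * U).trace := by
  rw [← tip_eq_trace]
  simp only [tip, sq]

theorem tip_add_right (A B C : Matrix (Fin m) (Fin n) ℝ) :
    tip A (B + C) = tip A B + tip A C := by
  simp only [tip_eq_trace, Matrix.mul_add, trace_add]

theorem tip_mul_mul_transpose (M : Matrix (Fin m) (Fin m) ℝ) (X : Matrix (Fin m) (Fin n) ℝ)
    (Y : Matrix (Fin n) (Fin n) ℝ) : tip M (X * Y * Xᵀ) = tip (Xᵀ * M * X) Y := by
  rw [tip_eq_trace, tip_eq_trace, ← Matrix.mul_assoc, ← Matrix.mul_assoc, trace_mul_comm]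
  simp only [transpose_mul, transpose_transpose, Matrix.mul_assoc]

theorem tip_diagonal_single (d : Fin m → ℝ) (i : Fin m) (x : ℝ) :
    tip (diagonal d) (single i i x) = d i * x := by
  simp [tip_eq_trace, trace, diagonal_mul, single_apply]

theorem tip_diagonal_skewUnit_sub (d w : Fin m → ℝ) {a b : Fin m} (hab : a ≠ b) :
    tip (diagonal d) ((skewUnit a b)ᵀ * skewUnit a b * diagonal w)
      - tip (diagonal d) (skewUnit a b * diagonal w * (skewUnit a b)ᵀ)
      = (d a - d b) * (w a - w b) := by
  rw [transpose_skewUnit_mul_self hab, skewUnit_mul_diagonal_mul_transpose hab]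
  simp only [Matrix.add_mul, single_mul_diagonal, tip_add_right, tip_diagonal_single]
  ring

end tip

/-- The Riemannian Hessian form `hess g(X)[U,U]` of `g(X) = -½ tr(Xᵀ M X N_r)` on `St(m, n)`. -/
noncomputable def stiefelHess {m n : ℕ} (M : Matrix (Fin m) (Fin m) ℝ)
    (X U : Matrix (Fin m) (Fin n) ℝ) : ℝ :=
  tip (Xᵀ * M * X) (Uᵀ * U * Nr n) - tip M (U * Nr n * Uᵀ)

theorem stiefelHess_mul {m n : ℕ} (M : Matrix (Fin m) (Fin m) ℝ) {X : Matrix (Fin m) (Fin n) ℝ}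
    (hXX : Xᵀ * X = 1) (K : Matrix (Fin n) (Fin n) ℝ) :
    stiefelHess M X (X * K) =
      tip (Xᵀ * M * X) (Kᵀ * K * Nr n) - tip (Xᵀ * M * X) (K * Nr n * Kᵀ) := by
  rw [stiefelHess, transpose_mul_self_mul_left hXX, ← tip_mul_mul_transpose M X (K * Nr n * Kᵀ)]
  simp only [transpose_mul, Matrix.mul_assoc]

theorem dmin_le_sub {N : ℕ} (lam : Fin N → ℝ) {r : ℕ} {s j : Fin N} (hsj : s < j)
    (hj : (j : ℕ) ≤ r) : dmin lam r ≤ lam s - lam j := by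
  refine csInf_le ?_ ⟨s, j, hsj, hj, rfl⟩
  refine ((Set.finite_range fun p : Fin N × Fin N => lam p.1 - lam p.2).subset ?_).bddBelow
  rintro d ⟨s, j, -, -, rfl⟩
  exact ⟨(s, j), rfl⟩

theorem stmt_9_general {N r : ℕ} (hrN : r < N)
    (M : Matrix (Fin N) (Fin N) ℝ)
    (lam : Fin N → ℝ) (v : Fin N → Fin N → ℝ)
    (horth : ∀ i j : Fin N, v i ⬝ᵥ v j = if i = j then 1 else 0)
    (heig : ∀ i : Fin N, M *ᵥ v i = lam i • v i)
    (hstrict : ∀ s j : Fin N, (s : ℕ) < (j : ℕ) → (j : ℕ) ≤ r → lam j < lam s)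
    (σ : Equiv.Perm (Fin r)) (hσ : σ ≠ 1)
    (X : Matrix (Fin N) (Fin r) ℝ)
    (hX : ∀ (i : Fin N) (j : Fin r), X i j = v (Fin.castLE hrN.le (σ j)) i) :
    ∃ U : Matrix (Fin N) (Fin r) ℝ, U ≠ 0 ∧ Xᵀ * U + Uᵀ * X = 0 ∧
      tip (Xᵀ * M * X) (Uᵀ * U * Nr r) - tip M (U * Nr r * Uᵀ) ≤
        -((1/2 : ℝ) * dmin lam r) * ∑ i, ∑ j, U i j ^ 2 := by
  obtain ⟨a, b, hab, hσba⟩ := σ.exists_lt_and_apply_lt_of_ne_one hσ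
  set c : Fin r → Fin N := fun j => Fin.castLE hrN.le (σ j)
  have hc : c.Injective := (Fin.castLE_injective _).comp σ.injective
  have hXX : Xᵀ * X = 1 := by
    ext j k
    simpa [mul_apply, hX, dotProduct, one_apply, hc.eq_iff] using horth (c j) (c k)
  have hXMX : Xᵀ * M * X = diagonal (lam ∘ c) :=
    transpose_mul_mul_eq_diagonal hXX fun j => by
      simp only [hX]
      exact heig (c j)
  have hσa : ((c a : Fin N) : ℕ) ≤ r := (σ a).isLt.le
  have hgap : lam (c a) < lam (c b) := hstrict _ _ hσba hσa
  have hdmin : dmin lam r ≤ lam (c b) - lam (c a) := dmin_le_sub lam hσba hσa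
  have hba : (a : ℝ) + 1 ≤ b := by exact_mod_cast hab
  refine ⟨X * skewUnit a b, mul_ne_zero_of_transpose_mul_self_eq_one hXX (skewUnit_ne_zero hab.ne),
    transpose_mul_mul_add_eq_zero_of_transpose_eq_neg hXX (skewUnit_transpose a b), ?_⟩
  change stiefelHess M X (X * skewUnit a b) ≤ _
  rw [stiefelHess_mul M hXX, hXMX, Nr, tip_diagonal_skewUnit_sub _ _ hab.ne,
    sum_sq_eq_trace_transpose_mul_self, transpose_mul_self_mul_left hXX,
    trace_transpose_skewUnit_mul_self hab.ne]
  simp only [Function.comp_apply]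
  nlinarith

/-- Theorem 2, Case 2: if the columns of `X_Ω` are the leading `r`
unit eigenvectors of `M` arranged according to a non-identity permutation `σ`,
then there is a nonzero tangent direction `U` with
`hess g(X_Ω)[U,U] ≤ −(1/2) d_min ‖U‖_F²`; `X_Ω` is a strict saddle point. -/
theorem stmt_9 {N r : ℕ} (hr : 1 ≤ r) (hrN : r < N)
    (M : Matrix (Fin N) (Fin N) ℝ) (hM : M.IsSymm)
    (lam : Fin N → ℝ) (v : Fin N → Fin N → ℝ)
    (horth : ∀ i j : Fin N, v i ⬝ᵥ v j = if i = j then 1 else 0)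
    (heig : ∀ i : Fin N, M *ᵥ v i = lam i • v i)
    (hstrict : ∀ s j : Fin N, (s : ℕ) < (j : ℕ) → (j : ℕ) ≤ r → lam j < lam s)
    (hmono : ∀ s j : Fin N, r ≤ (s : ℕ) → s ≤ j → lam j ≤ lam s)
    (σ : Equiv.Perm (Fin r)) (hσ : σ ≠ 1)
    (X : Matrix (Fin N) (Fin r) ℝ)
    (hX : ∀ (i : Fin N) (j : Fin r), X i j = v (Fin.castLE hrN.le (σ j)) i) :
    ∃ U : Matrix (Fin N) (Fin r) ℝ, U ≠ 0 ∧ Xᵀ * U + Uᵀ * X = 0 ∧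
      tip (Xᵀ * M * X) (Uᵀ * U * Nr r) - tip M (U * Nr r * Uᵀ) ≤
        -((1/2 : ℝ) * dmin lam r) * ∑ i, ∑ j, U i j ^ 2 :=
  stmt_9_general hrN M lam v horth heig hstrict σ hσ X hX
end

section
/- (Near-commutation with the diagonal Rayleigh-quotient matrix, from the proof of Lemma 2.) Let M be an N×N real symmetric matrix and let X ∈ St(N,r) with columns x₁, …, x_r. Define D ∈ ℝ^{r×r} as the diagonal matrix with entries D_{jj} = x_jᵀ M x_j. If ‖grad g(X)‖_F ≤ ε, then ‖X D − M X‖_F ≤ 3ε; in particular, ∑_{j=1}^r min_{1 ≤ n ≤ N} (x_jᵀ M x_j − λ_n)² ≤ 9ε², where λ₁, …, λ_N are the eigenvalues of M. -/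
open Matrix

/-- The Frobenius norm. -/
noncomputable def frob {m n : ℕ} (A : Matrix (Fin m) (Fin n) ℝ) : ℝ :=
  Real.sqrt (∑ i, ∑ j, A i j ^ 2)

/-- The Riemannian gradient `grad g(X) = (X Xᵀ − I) M X N_r − (1/2) X [Xᵀ M X, N_r]`. -/
noncomputable def gradg {N r : ℕ} (M : Matrix (Fin N) (Fin N) ℝ)
    (X : Matrix (Fin N) (Fin r) ℝ) : Matrix (Fin N) (Fin r) ℝ :=
  (X * Xᵀ - 1) * M * X * Nr r
    - (1/2 : ℝ) • (X * (Xᵀ * M * X * Nr r - Nr r * (Xᵀ * M * X)))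

section Aux

variable {N r m n : ℕ}

lemma fsq_nonneg (A : Matrix (Fin m) (Fin n) ℝ) :
    0 ≤ ∑ i, ∑ j, A i j ^ 2 :=
  Finset.sum_nonneg fun _ _ => Finset.sum_nonneg fun _ _ => sq_nonneg _

lemma frob_nonneg (A : Matrix (Fin m) (Fin n) ℝ) : 0 ≤ frob A :=
  Real.sqrt_nonneg _

lemma frob_sq (A : Matrix (Fin m) (Fin n) ℝ) :
    frob A ^ 2 = ∑ i, ∑ j, A i j ^ 2 :=
  Real.sq_sqrt (fsq_nonneg A)

lemma frob_le_of_sq_le {A : Matrix (Fin m) (Fin n) ℝ} {c : ℝ} (hc : 0 ≤ c)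
    (h : ∑ i, ∑ j, A i j ^ 2 ≤ c ^ 2) : frob A ≤ c := by
  calc frob A = Real.sqrt (∑ i, ∑ j, A i j ^ 2) := rfl
    _ ≤ Real.sqrt (c ^ 2) := Real.sqrt_le_sqrt h
    _ = c := Real.sqrt_sq hc

lemma fsq_neg (A : Matrix (Fin m) (Fin n) ℝ) :
    ∑ i, ∑ j, (-A) i j ^ 2 = ∑ i, ∑ j, A i j ^ 2 := by
  simp

lemma frob_neg (A : Matrix (Fin m) (Fin n) ℝ) : frob (-A) = frob A := by
  rw [frob, frob, fsq_neg]

lemma fsq_smul (c : ℝ) (A : Matrix (Fin m) (Fin n) ℝ) :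
    ∑ i, ∑ j, (c • A) i j ^ 2 = c ^ 2 * ∑ i, ∑ j, A i j ^ 2 := by
  simp [Finset.mul_sum, mul_pow]

lemma frob_eq_norm (A : Matrix (Fin m) (Fin n) ℝ) :
    frob A = ‖(WithLp.equiv 2 (Fin m × Fin n → ℝ)).symm (fun p => A p.1 p.2)‖ := by
  rw [EuclideanSpace.norm_eq, frob, Fintype.sum_prod_type]
  simp [Real.norm_eq_abs, sq_abs]

lemma frob_add_le (A B : Matrix (Fin m) (Fin n) ℝ) :
    frob (A + B) ≤ frob A + frob B := by
  rw [frob_eq_norm, frob_eq_norm A, frob_eq_norm B]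
  have h : ((WithLp.equiv 2 (Fin m × Fin n → ℝ)).symm (fun p => (A + B) p.1 p.2)) =
      (WithLp.equiv 2 (Fin m × Fin n → ℝ)).symm (fun p => A p.1 p.2) +
      (WithLp.equiv 2 (Fin m × Fin n → ℝ)).symm (fun p => B p.1 p.2) := rfl
  rw [h]; exact norm_add_le _ _

lemma fsq_eq_trace (A : Matrix (Fin m) (Fin n) ℝ) :
    ∑ i, ∑ j, A i j ^ 2 = Matrix.trace (Aᵀ * A) := by
  rw [Matrix.trace, Finset.sum_comm]
  simp [Matrix.diag, Matrix.mul_apply, sq]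

lemma fsq_mul_orth {X : Matrix (Fin N) (Fin r) ℝ} (hX : Xᵀ * X = 1)
    (B : Matrix (Fin r) (Fin r) ℝ) :
    ∑ i, ∑ j, (X * B) i j ^ 2 = ∑ i, ∑ j, B i j ^ 2 := by
  rw [fsq_eq_trace, fsq_eq_trace, Matrix.transpose_mul, Matrix.mul_assoc,
    ← Matrix.mul_assoc Xᵀ, hX, Matrix.one_mul]

lemma fsq_pythagoras {X : Matrix (Fin N) (Fin r) ℝ} (hX : Xᵀ * X = 1)
    (G : Matrix (Fin N) (Fin r) ℝ) :
    ∑ i, ∑ j, G i j ^ 2 = (∑ i, ∑ j, (Xᵀ * G) i j ^ 2) +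
      ∑ i, ∑ j, (((1 : Matrix (Fin N) (Fin N) ℝ) - X * Xᵀ) * G) i j ^ 2 := by
  rw [fsq_eq_trace, fsq_eq_trace, fsq_eq_trace]
  set Q : Matrix (Fin N) (Fin N) ℝ := 1 - X * Xᵀ with hQ
  have hQt : Qᵀ = Q := by simp [hQ, Matrix.transpose_sub, Matrix.transpose_mul]
  have hQQ : Q * Q = Q := by
    simp only [hQ, Matrix.sub_mul, Matrix.mul_sub, Matrix.one_mul, Matrix.mul_one]
    rw [Matrix.mul_assoc, ← Matrix.mul_assoc Xᵀ, hX, Matrix.one_mul]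
    abel
  have h1 : (Xᵀ * G)ᵀ * (Xᵀ * G) = Gᵀ * ((X * Xᵀ) * G) := by
    rw [Matrix.transpose_mul, Matrix.transpose_transpose, Matrix.mul_assoc, Matrix.mul_assoc]
  have h2 : (Q * G)ᵀ * (Q * G) = Gᵀ * (Q * G) := by
    rw [Matrix.transpose_mul, hQt, Matrix.mul_assoc, ← Matrix.mul_assoc Q, hQQ]
  rw [h1, h2]
  have h3 : Gᵀ * ((X * Xᵀ) * G) + Gᵀ * (Q * G) = Gᵀ * G := by
    rw [← Matrix.mul_add]
    simp only [hQ, Matrix.sub_mul, Matrix.one_mul]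
    rw [add_sub_cancel]
  rw [← Matrix.trace_add, h3]

lemma gradg_proj {M : Matrix (Fin N) (Fin N) ℝ} {X : Matrix (Fin N) (Fin r) ℝ}
    (hX : Xᵀ * X = 1) :
    Xᵀ * gradg M X = (-(1/2) : ℝ) • (Xᵀ * M * X * Nr r - Nr r * (Xᵀ * M * X)) := by
  have h0 : Xᵀ * (X * Xᵀ - 1) = 0 := by
    rw [Matrix.mul_sub, ← Matrix.mul_assoc, hX, Matrix.one_mul, Matrix.mul_one, sub_self]
  rw [gradg, Matrix.mul_sub, Matrix.mul_smul]
  rw [show (X * Xᵀ - 1) * M * X * Nr r = (X * Xᵀ - 1) * (M * X * Nr r) by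
    rw [Matrix.mul_assoc (X * Xᵀ - 1) M X, Matrix.mul_assoc (X * Xᵀ - 1) (M * X) (Nr r)]]
  rw [← Matrix.mul_assoc Xᵀ, h0, Matrix.zero_mul]
  rw [← Matrix.mul_assoc Xᵀ, hX, Matrix.one_mul]
  rw [zero_sub, ← neg_smul]

lemma gradg_perp {M : Matrix (Fin N) (Fin N) ℝ} {X : Matrix (Fin N) (Fin r) ℝ}
    (hX : Xᵀ * X = 1) :
    ((1 : Matrix (Fin N) (Fin N) ℝ) - X * Xᵀ) * gradg M X
      = -(((1 : Matrix (Fin N) (Fin N) ℝ) - X * Xᵀ) * (M * X) * Nr r) := by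
  set Q : Matrix (Fin N) (Fin N) ℝ := 1 - X * Xᵀ with hQ
  have hQX : Q * X = 0 := by
    rw [hQ, Matrix.sub_mul, Matrix.one_mul, Matrix.mul_assoc, hX, Matrix.mul_one, sub_self]
  have h1 : Q * (X * Xᵀ - 1) = -Q := by
    rw [Matrix.mul_sub, Matrix.mul_one, ← Matrix.mul_assoc, hQX, Matrix.zero_mul, zero_sub]
  rw [gradg, Matrix.mul_sub, Matrix.mul_smul]
  rw [show (X * Xᵀ - 1) * M * X * Nr r = (X * Xᵀ - 1) * (M * X * Nr r) by
    rw [Matrix.mul_assoc (X * Xᵀ - 1) M X, Matrix.mul_assoc (X * Xᵀ - 1) (M * X) (Nr r)]]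
  rw [← Matrix.mul_assoc Q, h1, ← Matrix.mul_assoc Q, hQX, Matrix.zero_mul, smul_zero,
    sub_zero, Matrix.neg_mul, ← Matrix.mul_assoc]

lemma fsq_offdiag_le (A : Matrix (Fin r) (Fin r) ℝ) :
    ∑ i, ∑ j, (A - Matrix.diagonal (fun j => A j j)) i j ^ 2
      ≤ ∑ i, ∑ j, (A * Nr r - Nr r * A) i j ^ 2 := by
  refine Finset.sum_le_sum fun i _ => Finset.sum_le_sum fun j _ => ?_
  simp only [Nr, Matrix.sub_apply, Matrix.mul_diagonal, Matrix.diagonal_mul,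
    Matrix.diagonal_apply]
  by_cases h : i = j
  · subst h; simp [sq_nonneg]
  · simp only [h, if_false, sub_zero]
    have key : (1 : ℝ) ≤ (((r : ℝ) - (j : ℕ)) - ((r : ℝ) - (i : ℕ)))^2 := by
      have h2 : ((r : ℝ) - (j : ℕ)) - ((r : ℝ) - (i : ℕ)) = (((i:ℕ) : ℤ) - ((j:ℕ) : ℤ) : ℤ) := by
        push_cast; ring
      have hne : ((i:ℕ) : ℤ) - ((j:ℕ) : ℤ) ≠ 0 := by
        have : (i:ℕ) ≠ (j:ℕ) := fun hc => h (Fin.ext hc)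
        omega
      have h1 : (1 : ℤ) ≤ |((i:ℕ) : ℤ) - ((j:ℕ) : ℤ)| := Int.one_le_abs hne
      rw [h2, ← sq_abs]
      have h3 : (1:ℝ) ≤ |((((i:ℕ) : ℤ) - ((j:ℕ) : ℤ) : ℤ) : ℝ)| := by
        rw [← Int.cast_abs]; exact_mod_cast h1
      nlinarith
    calc A i j ^ 2 = A i j ^2 * 1 := (mul_one _).symm
      _ ≤ A i j ^2 * (((r : ℝ) - (j : ℕ)) - ((r : ℝ) - (i : ℕ)))^2 :=
          mul_le_mul_of_nonneg_left key (sq_nonneg _)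
      _ = (A i j * ((r : ℝ) - (j : ℕ)) - ((r : ℝ) - (i : ℕ)) * A i j)^2 := by ring

lemma fsq_le_mul_Nr (B : Matrix (Fin N) (Fin r) ℝ) :
    ∑ i, ∑ j, B i j ^ 2 ≤ ∑ i, ∑ j, (B * Nr r) i j ^ 2 := by
  refine Finset.sum_le_sum fun i _ => Finset.sum_le_sum fun j _ => ?_
  rw [Nr, Matrix.mul_diagonal]
  have hj : (1 : ℝ) ≤ (r : ℝ) - (j : ℕ) := by
    have : ((j:ℕ) : ℝ) + 1 ≤ (r : ℝ) := by exact_mod_cast j.2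
    linarith
  have key : (1:ℝ) ≤ ((r:ℝ) - (j:ℕ))^2 := by nlinarith
  calc B i j ^2 = B i j ^2 * 1 := (mul_one _).symm
    _ ≤ B i j ^2 * ((r:ℝ) - (j:ℕ))^2 := mul_le_mul_of_nonneg_left key (sq_nonneg _)
    _ = (B i j * ((r:ℝ) - (j:ℕ)))^2 := (mul_pow _ _ _).symm

lemma sum_sq_orth_expand {v : Fin N → Fin N → ℝ}
    (horth : ∀ i j : Fin N, v i ⬝ᵥ v j = if i = j then 1 else 0)
    (w : Fin N → ℝ) : ∑ n, (v n ⬝ᵥ w) ^ 2 = ∑ i, w i ^ 2 := by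
  set V : Matrix (Fin N) (Fin N) ℝ := Matrix.of v with hV
  have hVVt : V * Vᵀ = 1 := by
    ext i j
    simp only [Matrix.mul_apply, Matrix.transpose_apply, hV, Matrix.of_apply,
      Matrix.one_apply]
    simpa [dotProduct] using horth i j
  have hVtV : Vᵀ * V = 1 := mul_eq_one_comm.mp hVVt
  have hmv : ∀ n, (V *ᵥ w) n = v n ⬝ᵥ w := by
    intro n; simp [Matrix.mulVec, hV, dotProduct]
  have h1 : ∑ n, (v n ⬝ᵥ w) ^ 2 = (V *ᵥ w) ⬝ᵥ (V *ᵥ w) := by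
    simp [dotProduct, hmv, sq]
  rw [h1, Matrix.dotProduct_mulVec]
  have h2 : V *ᵥ w = w ᵥ* Vᵀ := by rw [← Matrix.mulVec_transpose, Matrix.transpose_transpose]
  rw [h2, Matrix.vecMul_vecMul, hVtV, Matrix.vecMul_one]
  simp [dotProduct, sq]

end Aux

/-- near-commutation with the diagonal Rayleigh-quotient matrix:
for symmetric `M` with eigenvalues `λ₁, …, λ_N` (orthonormal eigenbasis `v`),
`X ∈ St(N,r)` with columns `x₁, …, x_r`, and `D = diag(x_jᵀ M x_j)`: if
`‖grad g(X)‖_F ≤ ε` then `‖X D − M X‖_F ≤ 3ε`; in particular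
`∑_j min_n (x_jᵀ M x_j − λ_n)² ≤ 9ε²`. -/
theorem stmt_19 {N r : ℕ} (hN : 0 < N)
    (M : Matrix (Fin N) (Fin N) ℝ) (hM : M.IsSymm)
    (lam : Fin N → ℝ) (v : Fin N → Fin N → ℝ)
    (horth : ∀ i j : Fin N, v i ⬝ᵥ v j = if i = j then 1 else 0)
    (heig : ∀ i : Fin N, M *ᵥ v i = lam i • v i)
    (X : Matrix (Fin N) (Fin r) ℝ) (hX : Xᵀ * X = 1) (ε : ℝ)
    (hgrad : frob (gradg M X) ≤ ε) :
    frob (X * Matrix.diagonal (fun j : Fin r =>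
        (fun i => X i j) ⬝ᵥ (M *ᵥ fun i => X i j)) - M * X) ≤ 3 * ε ∧
    ∑ j : Fin r, (⨅ n : Fin N,
        ((fun i => X i j) ⬝ᵥ (M *ᵥ fun i => X i j) - lam n) ^ 2) ≤ 9 * ε ^ 2 := by
  have hε : 0 ≤ ε := le_trans (frob_nonneg _) hgrad
  set G := gradg M X with hGdef
  set A : Matrix (Fin r) (Fin r) ℝ := Xᵀ * M * X with hAdef
  set Q : Matrix (Fin N) (Fin N) ℝ := 1 - X * Xᵀ with hQdef
  set d : Fin r → ℝ := fun j => (fun i => X i j) ⬝ᵥ (M *ᵥ fun i => X i j) with hddef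
  -- d j = A j j
  have hd : ∀ j, d j = A j j := by
    intro j
    simp only [hddef, hAdef, dotProduct, Matrix.mulVec, Matrix.mul_apply,
      Matrix.transpose_apply, dotProduct, Finset.sum_mul, Finset.mul_sum]
    rw [Finset.sum_comm]
    exact Finset.sum_congr rfl fun i _ => Finset.sum_congr rfl fun k _ => by ring
  have hdA : Matrix.diagonal d = Matrix.diagonal (fun j => A j j) := by
    rw [show d = (fun j => A j j) from funext hd]
  -- bound on the squared Frobenius norm of G
  have hG2 : ∑ i, ∑ j, G i j ^ 2 ≤ ε ^ 2 := by
    have := frob_sq G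
    nlinarith [frob_nonneg G]
  have hpyth := fsq_pythagoras hX G
  have hproj : ∑ i, ∑ j, (Xᵀ * G) i j ^ 2 ≤ ε ^ 2 := by
    have := fsq_nonneg (Q * G)
    rw [hQdef] at this; linarith
  have hperp : ∑ i, ∑ j, (Q * G) i j ^ 2 ≤ ε ^ 2 := by
    have := fsq_nonneg (Xᵀ * G)
    rw [hQdef]; linarith
  -- commutator bound
  have hcomm : A * Nr r - Nr r * A = (-2 : ℝ) • (Xᵀ * G) := by
    rw [hGdef, gradg_proj hX, ← hAdef, smul_smul]
    norm_num
  have hAD2 : ∑ i, ∑ j, (A - Matrix.diagonal (fun j => A j j)) i j ^ 2 ≤ 4 * ε ^ 2 := by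
    calc ∑ i, ∑ j, (A - Matrix.diagonal (fun j => A j j)) i j ^ 2
        ≤ ∑ i, ∑ j, (A * Nr r - Nr r * A) i j ^ 2 := fsq_offdiag_le A
      _ = ∑ i, ∑ j, ((-2 : ℝ) • (Xᵀ * G)) i j ^ 2 := by rw [hcomm]
      _ = 4 * ∑ i, ∑ j, (Xᵀ * G) i j ^ 2 := by rw [fsq_smul]; norm_num
      _ ≤ 4 * ε ^ 2 := by linarith
  -- perp bound
  have hQMX2 : ∑ i, ∑ j, (Q * (M * X)) i j ^ 2 ≤ ε ^ 2 := by
    have hQG : Q * G = -(Q * (M * X) * Nr r) := by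
      rw [hGdef, hQdef]; exact gradg_perp hX
    calc ∑ i, ∑ j, (Q * (M * X)) i j ^ 2
        ≤ ∑ i, ∑ j, (Q * (M * X) * Nr r) i j ^ 2 := fsq_le_mul_Nr _
      _ = ∑ i, ∑ j, (-(Q * (M * X) * Nr r)) i j ^ 2 := (fsq_neg _).symm
      _ = ∑ i, ∑ j, (Q * G) i j ^ 2 := by rw [hQG]
      _ ≤ ε ^ 2 := hperp
  -- decomposition
  set W : Matrix (Fin N) (Fin r) ℝ := X * Matrix.diagonal d - M * X with hWdef
  have hdec : W = X * (Matrix.diagonal d - A) + -(Q * (M * X)) := by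
    have hXA : (X * Xᵀ) * (M * X) = X * A := by
      rw [hAdef, Matrix.mul_assoc X Xᵀ (M * X), ← Matrix.mul_assoc Xᵀ M X]
    rw [hWdef, Matrix.mul_sub, hQdef, Matrix.sub_mul, Matrix.one_mul, hXA]
    abel
  -- first part
  have h1 : frob W ≤ 3 * ε := by
    have hb1 : frob (X * (Matrix.diagonal d - A)) ≤ 2 * ε := by
      refine frob_le_of_sq_le (by linarith) ?_
      rw [fsq_mul_orth hX]
      have : ∑ i, ∑ j, (Matrix.diagonal d - A) i j ^ 2
          = ∑ i, ∑ j, (A - Matrix.diagonal (fun j => A j j)) i j ^ 2 := by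
        rw [← hdA, ← fsq_neg (A - Matrix.diagonal d), neg_sub]
      rw [this]
      nlinarith
    have hb2 : frob (-(Q * (M * X))) ≤ ε := by
      rw [frob_neg]
      exact frob_le_of_sq_le hε hQMX2
    calc frob W ≤ frob (X * (Matrix.diagonal d - A)) + frob (-(Q * (M * X))) := by
          rw [hdec]; exact frob_add_le _ _
      _ ≤ 2 * ε + ε := add_le_add hb1 hb2
      _ = 3 * ε := by ring
  refine ⟨h1, ?_⟩
  -- second part
  have hW2 : ∑ i, ∑ j, W i j ^ 2 ≤ 9 * ε ^ 2 := by
    have := frob_sq W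
    nlinarith [frob_nonneg W]
  have key : ∀ j : Fin r, (⨅ n : Fin N, (d j - lam n) ^ 2) ≤ ∑ i, W i j ^ 2 := by
    intro j
    set x : Fin N → ℝ := fun i => X i j with hxdef
    set w : Fin N → ℝ := fun i => W i j with hwdef
    have hwi : ∀ i, w i = d j * x i - (M *ᵥ x) i := by
      intro i
      show (X * Matrix.diagonal d) i j - (M * X) i j = _
      rw [Matrix.mul_diagonal, Matrix.mul_apply]
      simp only [Matrix.mulVec, dotProduct, hxdef]
      ring
    have hcn : ∀ n, v n ⬝ᵥ w = (d j - lam n) * (v n ⬝ᵥ x) := by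
      intro n
      have hMx : v n ⬝ᵥ (M *ᵥ x) = lam n * (v n ⬝ᵥ x) := by
        rw [Matrix.dotProduct_mulVec, ← Matrix.mulVec_transpose, hM.eq, heig n,
          smul_dotProduct]
        rfl
      have : v n ⬝ᵥ w = d j * (v n ⬝ᵥ x) - v n ⬝ᵥ (M *ᵥ x) := by
        simp only [dotProduct, hwi, mul_sub, Finset.sum_sub_distrib, Finset.mul_sum]
        congr 1
        exact Finset.sum_congr rfl fun i _ => by ring
      rw [this, hMx]; ring
    have hx1 : ∑ n, (v n ⬝ᵥ x) ^ 2 = 1 := by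
      rw [sum_sq_orth_expand horth]
      have : ∑ i, x i ^ 2 = (Xᵀ * X) j j := by
        simp [Matrix.mul_apply, hxdef, sq]
      rw [this, hX, Matrix.one_apply_eq]
    have hsum : ∑ i, w i ^ 2 = ∑ n, ((d j - lam n) * (v n ⬝ᵥ x)) ^ 2 := by
      rw [← sum_sq_orth_expand horth w]
      exact Finset.sum_congr rfl fun n _ => by rw [hcn n]
    have hbdd : BddBelow (Set.range fun n : Fin N => (d j - lam n) ^ 2) :=
      Set.Finite.bddBelow (Set.finite_range _)
    calc (⨅ n : Fin N, (d j - lam n) ^ 2)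
        = (⨅ n : Fin N, (d j - lam n) ^ 2) * ∑ n, (v n ⬝ᵥ x) ^ 2 := by rw [hx1, mul_one]
      _ = ∑ n, (⨅ m : Fin N, (d j - lam m) ^ 2) * (v n ⬝ᵥ x) ^ 2 := Finset.mul_sum _ _ _
      _ ≤ ∑ n, (d j - lam n) ^ 2 * (v n ⬝ᵥ x) ^ 2 := by
          refine Finset.sum_le_sum fun n _ => ?_
          exact mul_le_mul_of_nonneg_right (ciInf_le hbdd n) (sq_nonneg _)
      _ = ∑ n, ((d j - lam n) * (v n ⬝ᵥ x)) ^ 2 := by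
          exact Finset.sum_congr rfl fun n _ => (mul_pow _ _ _).symm
      _ = ∑ i, w i ^ 2 := hsum.symm
      _ = ∑ i, W i j ^ 2 := rfl
  calc ∑ j : Fin r, (⨅ n : Fin N, (d j - lam n) ^ 2)
      ≤ ∑ j : Fin r, ∑ i, W i j ^ 2 := Finset.sum_le_sum fun j _ => key j
    _ = ∑ i, ∑ j, W i j ^ 2 := Finset.sum_comm
    _ ≤ 9 * ε ^ 2 := hW2
end
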